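/- Let φ_1, …, φ_n be nonzero reals with |φ_1| ≥ |φ_2| ≥ … ≥ |φ_n|, and let F := V diag(φ_1, …, φ_n) Vᵀ, so F v_i = φ_i v_i. Let p ≤ n, let K ∈ ℝ^{n×p}, let P := Σ_{i=1}^{p} v_i v_iᵀ, and assume rank(PK) = p. Fix i ≤ p and let s_i be the unique vector in the column space of K with P s_i = v_i; set β_i := ‖v_i − s_i‖₂. Let 𝒫_V be the orthogonal projection of ℝ^n onto the column space of F^ℓ K. Then ‖(I − 𝒫_V) v_i‖₂ ≤ β_i |φ_{p+1}/φ_i|^ℓ. -/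

import Mathlib

/-!
Write `s = V c`. Since `P s = vᵢ`, the first `p` coordinates of `c` are those of `eᵢ`, so
`u := φᵢ⁻ˡ Fˡ s = V g` with `gⱼ = (φⱼ/φᵢ)ˡ cⱼ` agrees with `vᵢ = V eᵢ` in the first `p`
coordinates, while in the others `|gⱼ| ≤ |φ_{p+1}/φᵢ|ˡ |cⱼ|`. Hence
`‖vᵢ − u‖ ≤ |φ_{p+1}/φᵢ|ˡ ‖eᵢ − c‖ = |φ_{p+1}/φᵢ|ˡ βᵢ`, and `u` lies in the column space of `Fˡ K`,
so the orthogonal projection onto it approximates `vᵢ` at least as well as `u`.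
-/

open Matrix

noncomputable def enorm {k : ℕ} (x : Fin k → ℝ) : ℝ := Real.sqrt (∑ a, x a ^ 2)

section

variable {R m n : Type*} [CommSemiring R]

lemma Matrix.mem_span_range_transpose_iff [Fintype n] {M : Matrix m n R} {u : m → R} :
    u ∈ Submodule.span R (Set.range Mᵀ) ↔ ∃ w, M *ᵥ w = u := by
  change u ∈ Submodule.span R (Set.range M.col) ↔ _
  rw [← range_mulVecLin]
  rfl

lemma Matrix.mulVec_eq_self_of_mem_span_range_transpose [Fintype m] {Q : Matrix m m R}
    (hQQ : Q * Q = Q) {u : m → R} (hu : u ∈ Submodule.span R (Set.range Qᵀ)) : Q *ᵥ u = u := by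
  obtain ⟨w, rfl⟩ := mem_span_range_transpose_iff.mp hu
  rw [mulVec_mulVec, hQQ]

variable [Fintype m] [Fintype n] [DecidableEq n]

lemma Matrix.sum_vecMulVec_mulVec (V : Matrix m n R) (S : Finset n) (x : m → R) :
    (∑ j ∈ S, vecMulVec (fun a => V a j) (fun a => V a j)) *ᵥ x =
      V *ᵥ fun j => if j ∈ S then (Vᵀ *ᵥ x) j else 0 := by
  ext a
  simp only [mulVec, dotProduct, Matrix.sum_apply, vecMulVec_apply, transpose_apply, mul_ite,
    mul_zero, Finset.sum_ite_mem, Finset.univ_inter, Finset.sum_mul, Finset.mul_sum, mul_assoc]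
  exact Finset.sum_comm

lemma Matrix.pow_mulVec_mulVec_of_eq_conj_diagonal [DecidableEq m] {V : Matrix m n R}
    (hV : Vᵀ * V = 1) {φ : n → R} {F : Matrix m m R} (hF : F = V * diagonal φ * Vᵀ) (k : ℕ)
    (w : n → R) :
    (F ^ k) *ᵥ (V *ᵥ w) = V *ᵥ (φ ^ k * w) := by
  have hstep : ∀ x, F *ᵥ (V *ᵥ x) = V *ᵥ (φ * x) := fun x => by
    rw [hF, mulVec_mulVec, Matrix.mul_assoc _ Vᵀ V, hV, Matrix.mul_one, ← mulVec_mulVec]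
    congr 1
    ext j
    rw [mulVec_diagonal, Pi.mul_apply]
  induction k generalizing w with
  | zero => simp
  | succ k ih => rw [pow_succ', ← mulVec_mulVec, ih, hstep, pow_succ', mul_assoc]

end

lemma enorm_eq_sqrt_dotProduct {k : ℕ} (x : Fin k → ℝ) : _root_.enorm x = √(x ⬝ᵥ x) := by
  simp only [_root_.enorm, dotProduct, sq]

lemma enorm_mulVec_of_transpose_mul_self {k m : ℕ} {V : Matrix (Fin m) (Fin k) ℝ}
    (hV : Vᵀ * V = 1) (x : Fin k → ℝ) : _root_.enorm (V *ᵥ x) = _root_.enorm x := by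
  rw [enorm_eq_sqrt_dotProduct, enorm_eq_sqrt_dotProduct, dotProduct_mulVec, ← mulVec_transpose,
    mulVec_mulVec, hV, one_mulVec]

lemma enorm_sub_mulVec_le {k : ℕ} {Q : Matrix (Fin k) (Fin k) ℝ} (hQT : Qᵀ = Q) (hQQ : Q * Q = Q)
    (v : Fin k → ℝ) {u : Fin k → ℝ} (hu : Q *ᵥ u = u) :
    _root_.enorm (v - Q *ᵥ v) ≤ _root_.enorm (v - u) := by
  have hdecomp : v - u = (v - Q *ᵥ v) + Q *ᵥ (v - u) := by rw [mulVec_sub, hu]; abel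
  have horth : (v - Q *ᵥ v) ⬝ᵥ Q *ᵥ (v - u) = 0 := by
    rw [dotProduct_mulVec, ← mulVec_transpose, hQT, mulVec_sub, mulVec_mulVec, hQQ, sub_self,
      zero_dotProduct]
  rw [enorm_eq_sqrt_dotProduct, enorm_eq_sqrt_dotProduct, hdecomp]
  refine Real.sqrt_le_sqrt ?_
  rw [add_dotProduct, dotProduct_add, dotProduct_add, horth, dotProduct_comm (Q *ᵥ _), horth]
  simpa using dotProduct_self_star_nonneg (Q *ᵥ (v - u))

lemma enorm_le_mul_of_abs_le {k : ℕ} {x y : Fin k → ℝ} {q : ℝ} (hq : 0 ≤ q)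
    (h : ∀ j, |x j| ≤ q * |y j|) : _root_.enorm x ≤ q * _root_.enorm y := by
  unfold _root_.enorm
  rw [← Real.sqrt_sq hq, ← Real.sqrt_mul (sq_nonneg q), Finset.mul_sum]
  refine Real.sqrt_le_sqrt (Finset.sum_le_sum fun j _ => ?_)
  rw [← sq_abs (x j), ← sq_abs (y j), ← mul_pow]
  exact pow_le_pow_left₀ (abs_nonneg _) (h j) 2

lemma abs_single_sub_pow_mul_le {ι : Type*} [DecidableEq ι] {S : Finset ι} {φ c : ι → ℝ}
    {i : ι} (hi : i ∈ S) (hφi : φ i ≠ 0) (hc : ∀ j ∈ S, c j = (Pi.single i 1 : ι → ℝ) j) {r : ℝ}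
    (hr : ∀ j ∉ S, |φ j / φ i| ≤ r) (ℓ : ℕ) (j : ι) :
    |((Pi.single i 1 : ι → ℝ) - fun j => (φ j / φ i) ^ ℓ * c j) j| ≤
      r ^ ℓ * |((Pi.single i 1 : ι → ℝ) - c) j| := by
  by_cases hj : j ∈ S
  · rw [Pi.sub_apply, Pi.sub_apply, hc j hj]
    rcases eq_or_ne j i with rfl | hji
    · simp [div_self hφi]
    · simp [Pi.single_eq_of_ne hji]
  · have hji : j ≠ i := ne_of_mem_of_not_mem hi hj |>.symm
    simp only [Pi.sub_apply, Pi.single_eq_of_ne hji, zero_sub, abs_neg, abs_mul, abs_pow]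
    gcongr
    exact hr j hj

theorem stmt_10_general {n : ℕ}
    (V : Matrix (Fin n) (Fin n) ℝ) (hV : Vᵀ * V = 1)
    (φ : Fin n → ℝ) (hφ0 : ∀ i, φ i ≠ 0)
    (hφmono : ∀ i j : Fin n, i ≤ j → |φ j| ≤ |φ i|)
    (F : Matrix (Fin n) (Fin n) ℝ) (hF : F = V * Matrix.diagonal φ * Vᵀ)
    (ℓ : ℕ)
    (p : ℕ) (hp : p < n)
    (K : Matrix (Fin n) (Fin p) ℝ)
    (P : Matrix (Fin n) (Fin n) ℝ)
    (hP : P = ∑ i ∈ Finset.univ.filter fun i : Fin n => (i : ℕ) < p,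
      Matrix.vecMulVec (fun a => V a i) (fun a => V a i))
    (i : Fin n) (hi : (i : ℕ) < p)
    (s : Fin n → ℝ)
    (hsmem : s ∈ Submodule.span ℝ (Set.range Kᵀ))
    (hsproj : P.mulVec s = fun a => V a i)
    (β : ℝ) (hβ : β = _root_.enorm (fun a => V a i - s a))
    (PV : Matrix (Fin n) (Fin n) ℝ)
    (hPVsym : PVᵀ = PV) (hPVidem : PV * PV = PV)
    (hPVrange : Submodule.span ℝ (Set.range PVᵀ) =
      Submodule.span ℝ (Set.range (F ^ ℓ * K)ᵀ)) :
    _root_.enorm (fun a => V a i - PV.mulVec (fun b => V b i) a) ≤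
      β * |φ ⟨p, hp⟩ / φ i| ^ ℓ := by
  set S := Finset.univ.filter fun j : Fin n => (j : ℕ) < p
  set e : Fin n → ℝ := Pi.single i 1
  have hVe : V *ᵥ e = fun a => V a i := mulVec_single_one V i
  set c := Vᵀ *ᵥ s
  have hVc : V *ᵥ c = s := by rw [mulVec_mulVec, mul_eq_one_comm.mp hV, one_mulVec]
  -- `P s = vᵢ` says that the coordinates of `s` in the basis `V` start as those of `vᵢ`
  have hc : ∀ j ∈ S, c j = e j := by
    have h := congrArg (Vᵀ *ᵥ ·) (hsproj.trans hVe.symm)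
    simp only [hP, sum_vecMulVec_mulVec, mulVec_mulVec, hV, one_mulVec] at h
    intro j hj
    simpa [hj] using congrFun h j
  set g : Fin n → ℝ := fun j => (φ j / φ i) ^ ℓ * c j
  -- `V g = φᵢ⁻ˡ Fˡ s` lies in the column space of `Fˡ K`
  have hPVg : PV *ᵥ (V *ᵥ g) = V *ᵥ g := by
    refine mulVec_eq_self_of_mem_span_range_transpose hPVidem ?_
    obtain ⟨w, hw⟩ := mem_span_range_transpose_iff.mp hsmem
    rw [hPVrange, mem_span_range_transpose_iff]
    refine ⟨(φ i ^ ℓ)⁻¹ • w, ?_⟩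
    rw [mulVec_smul, ← mulVec_mulVec, hw, ← hVc, pow_mulVec_mulVec_of_eq_conj_diagonal hV hF,
      ← mulVec_smul]
    congr 1
    ext j
    simp only [g, Pi.smul_apply, Pi.mul_apply, Pi.pow_apply, smul_eq_mul, div_pow]
    ring
  have hratio : ∀ j ∉ S, |φ j / φ i| ≤ |φ ⟨p, hp⟩ / φ i| := fun j hj => by
    rw [abs_div, abs_div]
    refine div_le_div_of_nonneg_right (hφmono _ _ (Fin.le_def.mpr ?_)) (abs_nonneg _)
    simpa [S] using hj
  calc _root_.enorm (fun a => V a i - PV.mulVec (fun b => V b i) a)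
      = _root_.enorm (V *ᵥ e - PV *ᵥ (V *ᵥ e)) := by rw [hVe]; rfl
    _ ≤ _root_.enorm (V *ᵥ e - V *ᵥ g) := enorm_sub_mulVec_le hPVsym hPVidem _ hPVg
    _ = _root_.enorm (e - g) := by rw [← mulVec_sub, enorm_mulVec_of_transpose_mul_self hV]
    _ ≤ |φ ⟨p, hp⟩ / φ i| ^ ℓ * _root_.enorm (e - c) := enorm_le_mul_of_abs_le (by positivity)
          (abs_single_sub_pow_mul_le (by simpa [S] using hi) (hφ0 i) hc hratio ℓ)
    _ = β * |φ ⟨p, hp⟩ / φ i| ^ ℓ := by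
        rw [hβ, ← enorm_mulVec_of_transpose_mul_self hV, mulVec_sub, hVe, hVc, mul_comm]; rfl

/-- Error bound for the right singular vectors: with
`F = V diag(φ) Vᵀ` (so `F vᵢ = φᵢ vᵢ`), `|φ₁| ≥ … ≥ |φₙ|`, `rank(PK) = p`, `sᵢ`
the unique vector of the column space of `K` with `P sᵢ = vᵢ`,
`βᵢ = ‖vᵢ − sᵢ‖₂`, and `𝒫_V` the orthogonal projection onto the column space of
`Fˡ K`, one has `‖(I − 𝒫_V) vᵢ‖₂ ≤ βᵢ |φ_{p+1}/φᵢ|ˡ`. -/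
theorem stmt_10 {n : ℕ}
    (V : Matrix (Fin n) (Fin n) ℝ) (hV : Vᵀ * V = 1)
    (φ : Fin n → ℝ) (hφ0 : ∀ i, φ i ≠ 0)
    (hφmono : ∀ i j : Fin n, i ≤ j → |φ j| ≤ |φ i|)
    (F : Matrix (Fin n) (Fin n) ℝ) (hF : F = V * Matrix.diagonal φ * Vᵀ)
    (ℓ : ℕ) (hℓ : 0 < ℓ)
    (p : ℕ) (hp : p < n)
    (K : Matrix (Fin n) (Fin p) ℝ)
    (P : Matrix (Fin n) (Fin n) ℝ)
    (hP : P = ∑ i ∈ Finset.univ.filter fun i : Fin n => (i : ℕ) < p,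
      Matrix.vecMulVec (fun a => V a i) (fun a => V a i))
    (hrank : (P * K).rank = p)
    (i : Fin n) (hi : (i : ℕ) < p)
    (s : Fin n → ℝ)
    (hsmem : s ∈ Submodule.span ℝ (Set.range Kᵀ))
    (hsproj : P.mulVec s = fun a => V a i)
    (β : ℝ) (hβ : β = _root_.enorm (fun a => V a i - s a))
    (PV : Matrix (Fin n) (Fin n) ℝ)
    (hPVsym : PVᵀ = PV) (hPVidem : PV * PV = PV)
    (hPVrange : Submodule.span ℝ (Set.range PVᵀ) =
      Submodule.span ℝ (Set.range (F ^ ℓ * K)ᵀ)) :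
    _root_.enorm (fun a => V a i - PV.mulVec (fun b => V b i) a) ≤
      β * |φ ⟨p, hp⟩ / φ i| ^ ℓ :=
  stmt_10_general V hV φ hφ0 hφmono F hF ℓ p hp K P hP i hi s hsmem hsproj β hβ PV hPVsym hPVidem
    hPVrange
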